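/- Let f(t,s) = e^{-γ̄(t-s)} 1_{{0≤s≤t≤T}} be the kernel on [0,∞)² with γ = λ - iω, λ > 0, and let h(t,s) = conj(f(s,t)) = e^{-γ(s-t)} 1_{{0≤t≤s≤T}}. Then the (1,0)-contraction (f ⊗_{1,0} h)(t,s) = ∫₀^∞ f(t,u) h(u,s) du satisfies ‖f ⊗_{1,0} h‖²_{L²} ≤ C(λ) · T for an explicit constant C(λ) depending only on λ, so that for ψ_T = T^{-1/2} f, ‖ψ_T ⊗_{1,0} h_T‖² ≤ C(λ)/T. -/

import Mathlib

open Complex MeasureTheory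

open Real Set

/-! Both `f` and `h` are dominated in modulus by the causal kernel `e^{-λ(t-u)} 1_{u ≤ t}`, whose
self-contraction is exactly `e^{-λ|t-s|}/(2λ)`. Its square `e^{-2λ|t-s|}/(4λ²)` has integral
`1/(4λ³)` in `s`, and the contraction vanishes unless `t ∈ [0, T]`, so the squared `L²` norm is at
most `T/(4λ³)`. Rescaling by `T^{-1/2}` twice divides the squared norm by `T²`. -/

noncomputable def causalExpKernel (a t u : ℝ) : ℝ :=
  (Iic t).indicator (fun u => rexp (-a * (t - u))) u

lemma causalExpKernel_nonneg (a t u : ℝ) : 0 ≤ causalExpKernel a t u :=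
  indicator_nonneg (fun _ _ => (exp_pos _).le) u

/-- Since `t + s = |t - s| + 2 min t s`, the product factors into a decay in `|t - s|` and a
kernel in `u` alone. -/
lemma causalExpKernel_mul (a t s u : ℝ) :
    causalExpKernel a t u * causalExpKernel a s u =
      rexp (-a * |t - s|) * rexp (-(2 * a) * min t s) *
        (Iic (min t s)).indicator (fun u => rexp (2 * a * u)) u := by
  have hsum : t + s = |t - s| + 2 * min t s := by
    rcases le_total t s with h | h
    · rw [abs_of_nonpos (by linarith), min_eq_left h]; ring
    · rw [abs_of_nonneg (by linarith), min_eq_right h]; ring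
  by_cases hu : u ≤ min t s
  · have ⟨hut, hus⟩ := le_min_iff.mp hu
    simp only [causalExpKernel, indicator_of_mem (mem_Iic.mpr hut),
      indicator_of_mem (mem_Iic.mpr hus), indicator_of_mem (mem_Iic.mpr hu), ← Real.exp_add]
    congr 1
    linear_combination (-a) * hsum
  · rw [indicator_of_notMem (notMem_Iic.mpr (not_le.mp hu)), mul_zero]
    rcases min_choice t s with h | h <;> rw [h] at hu <;>
      simp [causalExpKernel, indicator_of_notMem (notMem_Iic.mpr (not_le.mp hu))]

lemma integrable_causalExpKernel_mul {a : ℝ} (ha : 0 < a) (t s : ℝ) :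
    Integrable fun u => causalExpKernel a t u * causalExpKernel a s u := by
  simp_rw [causalExpKernel_mul]
  exact ((integrableOn_exp_mul_Iic (by positivity) _).integrable_indicator
    measurableSet_Iic).const_mul _

lemma integral_causalExpKernel_mul {a : ℝ} (ha : 0 < a) (t s : ℝ) :
    ∫ u, causalExpKernel a t u * causalExpKernel a s u = rexp (-a * |t - s|) / (2 * a) := by
  simp_rw [causalExpKernel_mul]
  rw [integral_const_mul, integral_indicator measurableSet_Iic,
    integral_exp_mul_Iic (by positivity), mul_div_assoc', mul_assoc, ← Real.exp_add]
  ring_nf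
  simp

lemma norm_ite_exp_le_causalExpKernel (γ : ℂ) (T t u : ℝ) :
    ‖if 0 ≤ u ∧ u ≤ t ∧ t ≤ T then cexp (-(starRingEnd ℂ) γ * ((t : ℂ) - u)) else 0‖ ≤
      causalExpKernel γ.re t u := by
  split_ifs with h
  · rw [causalExpKernel, indicator_of_mem (mem_Iic.mpr h.2.1), norm_exp,
      ← ofReal_sub, re_mul_ofReal, neg_re, conj_re]
  · rw [norm_zero]
    exact causalExpKernel_nonneg _ _ _

lemma norm_setIntegral_mul_le_of_le_causalExpKernel {a : ℝ} (ha : 0 < a) {f g : ℝ → ℝ → ℂ}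
    (hf : ∀ t u, ‖f t u‖ ≤ causalExpKernel a t u) (hg : ∀ u s, ‖g u s‖ ≤ causalExpKernel a s u)
    (S : Set ℝ) (t s : ℝ) :
    ‖∫ u in S, f t u * g u s‖ ≤ rexp (-a * |t - s|) / (2 * a) := by
  have hint := integrable_causalExpKernel_mul ha t s
  have hnonneg : 0 ≤ fun u => causalExpKernel a t u * causalExpKernel a s u := fun u =>
    mul_nonneg (causalExpKernel_nonneg _ _ _) (causalExpKernel_nonneg _ _ _)
  calc ‖∫ u in S, f t u * g u s‖
      ≤ ∫ u in S, causalExpKernel a t u * causalExpKernel a s u :=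
        norm_integral_le_of_norm_le hint.integrableOn <| .of_forall fun u => by
          rw [norm_mul]
          exact mul_le_mul (hf t u) (hg u s) (norm_nonneg _) (causalExpKernel_nonneg _ _ _)
    _ ≤ ∫ u, causalExpKernel a t u * causalExpKernel a s u :=
        setIntegral_le_integral hint (.of_forall hnonneg)
    _ = rexp (-a * |t - s|) / (2 * a) := integral_causalExpKernel_mul ha t s

lemma sq_norm_setIntegral_mul_le_of_le_causalExpKernel {a : ℝ} (ha : 0 < a)
    {f g : ℝ → ℝ → ℂ} (hf : ∀ t u, ‖f t u‖ ≤ causalExpKernel a t u)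
    (hg : ∀ u s, ‖g u s‖ ≤ causalExpKernel a s u) (S : Set ℝ) (t s : ℝ) :
    ‖∫ u in S, f t u * g u s‖ ^ 2 ≤ rexp (-(2 * a) * |s - t|) / (2 * a) ^ 2 :=
  calc ‖∫ u in S, f t u * g u s‖ ^ 2 ≤ (rexp (-a * |t - s|) / (2 * a)) ^ 2 :=
        pow_le_pow_left₀ (norm_nonneg _)
          (norm_setIntegral_mul_le_of_le_causalExpKernel ha hf hg S t s) 2
    _ = rexp (-(2 * a) * |s - t|) / (2 * a) ^ 2 := by
        rw [div_pow, ← Real.exp_nat_mul, abs_sub_comm]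
        ring_nf

lemma integrable_exp_neg_mul_abs {c : ℝ} (hc : 0 < c) :
    Integrable fun x : ℝ => rexp (-c * |x|) := by
  rw [← integrableOn_univ, ← Iic_union_Ioi (a := 0)]
  refine IntegrableOn.union ?_ ?_
  · refine (integrableOn_exp_mul_Iic hc 0).congr_fun (fun x hx => ?_) measurableSet_Iic
    rw [abs_of_nonpos hx, neg_mul_neg]
  · refine (integrableOn_exp_mul_Ioi (neg_lt_zero.mpr hc) 0).congr_fun
      (fun x hx => ?_) measurableSet_Ioi
    rw [abs_of_pos hx]

lemma integral_exp_neg_mul_abs {c : ℝ} (hc : 0 < c) :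
    ∫ x : ℝ, rexp (-c * |x|) = 2 / c := by
  rw [integral_comp_abs (f := fun x => rexp (-c * x)),
    integral_exp_mul_Ioi (neg_lt_zero.mpr hc)]
  field_simp
  simp

lemma integral_integral_le_of_le_comp_sub {F : ℝ → ℝ → ℝ} {g : ℝ → ℝ} {S : Set ℝ}
    (hS : MeasurableSet S) (hSfin : volume S ≠ ⊤) (hg : Integrable g)
    (hF0 : ∀ t s, 0 ≤ F t s) (hFg : ∀ t s, F t s ≤ g (s - t)) (hFS : ∀ t ∉ S, ∀ s, F t s = 0) :
    ∫ t, ∫ s, F t s ≤ (∫ x, g x) * volume.real S := by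
  have hslice : ∀ t, ∫ s, F t s ≤ S.indicator (fun _ => ∫ x, g x) t := by
    intro t
    by_cases ht : t ∈ S
    · rw [indicator_of_mem ht, ← integral_sub_right_eq_self g t]
      exact integral_mono_of_nonneg (.of_forall (hF0 t)) (hg.comp_sub_right t)
        (.of_forall (hFg t))
    · simp [indicator_of_notMem ht, hFS t ht]
  calc ∫ t, ∫ s, F t s ≤ ∫ t, S.indicator (fun _ => ∫ x, g x) t :=
        integral_mono_of_nonneg (.of_forall fun t => integral_nonneg (hF0 t))
          ((integrableOn_const hSfin).integrable_indicator hS) (.of_forall hslice)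
    _ = (∫ x, g x) * volume.real S := by
        rw [integral_indicator_const _ hS, smul_eq_mul, mul_comm]

lemma integral_integral_norm_sq_rescale {T : ℝ} (hT : 0 ≤ T) (f h : ℝ → ℝ → ℂ) (S : Set ℝ) :
    ∫ t : ℝ, ∫ s : ℝ, ‖∫ u in S, ((Real.sqrt T)⁻¹ * f t u) * ((Real.sqrt T)⁻¹ * h u s)‖ ^ 2 =
      (∫ t : ℝ, ∫ s : ℝ, ‖∫ u in S, f t u * h u s‖ ^ 2) / T ^ 2 := by
  have hinner : ∀ t s, ‖∫ u in S, ((Real.sqrt T)⁻¹ * f t u) * ((Real.sqrt T)⁻¹ * h u s)‖ ^ 2 =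
      ‖∫ u in S, f t u * h u s‖ ^ 2 / T ^ 2 := by
    intro t s
    simp_rw [mul_mul_mul_comm _ (f t _), integral_const_mul]
    rw [norm_mul, mul_pow, ← ofReal_mul, norm_real, Real.norm_eq_abs, sq_abs, ← mul_inv,
      ← pow_two, Real.sq_sqrt hT]
    ring
  simp_rw [hinner, integral_div]

/-- With `γ = λ - iω`, `λ > 0`, `f(t,s) = e^{-γ̄(t-s)} 1_{0≤s≤t≤T}` and
`h(t,s) = conj (f(s,t)) = e^{-γ(s-t)} 1_{0≤t≤s≤T}`, the `(1,0)`-contraction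
`(f ⊗_{1,0} h)(t,s) = ∫₀^∞ f(t,u) h(u,s) du` satisfies
`‖f ⊗_{1,0} h‖²_{L²} ≤ C(λ) · T` for a constant `C(λ)` depending only on `λ`;
consequently `‖ψ_T ⊗_{1,0} h_T‖² ≤ C(λ)/T` for `ψ_T = T^{-1/2} f`, `h_T = T^{-1/2} h`. -/
theorem contraction_l2_bound (lam : ℝ) (hlam : 0 < lam) :
    ∃ C : ℝ, ∀ (om T : ℝ), 0 < T →
      ∀ (γ : ℂ) (f h : ℝ → ℝ → ℂ),
        γ = (lam : ℂ) - Complex.I * om →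
        (∀ t s, f t s = if 0 ≤ s ∧ s ≤ t ∧ t ≤ T then
            Complex.exp (-(starRingEnd ℂ) γ * ((t : ℂ) - s)) else 0) →
        (∀ t s, h t s = (starRingEnd ℂ) (f s t)) →
        (∫ t : ℝ, ∫ s : ℝ, ‖∫ u in Set.Ioi (0:ℝ), f t u * h u s‖ ^ 2) ≤ C * T ∧
        (∫ t : ℝ, ∫ s : ℝ,
            ‖∫ u in Set.Ioi (0:ℝ),
                ((Real.sqrt T)⁻¹ * f t u) * ((Real.sqrt T)⁻¹ * h u s)‖ ^ 2) ≤ C / T := by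
  refine ⟨(4 * lam ^ 3)⁻¹, fun om T hT γ f h hγ hf hh => ?_⟩
  have hre : γ.re = lam := by simp [hγ]
  have hfK : ∀ t u, ‖f t u‖ ≤ causalExpKernel lam t u := fun t u => by
    rw [hf, ← hre]; exact norm_ite_exp_le_causalExpKernel γ T t u
  have hhK : ∀ u s, ‖h u s‖ ≤ causalExpKernel lam s u := fun u s => by
    rw [hh, RCLike.norm_conj]; exact hfK s u
  have hsupp : ∀ t ∉ Icc 0 T, ∀ s, ‖∫ u in Ioi (0:ℝ), f t u * h u s‖ ^ 2 = 0 := by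
    intro t ht s
    have hft : ∀ u, f t u = 0 := fun u => by
      rw [hf, if_neg fun ⟨hu, hut, htT⟩ => ht ⟨hu.trans hut, htT⟩]
    simp [hft]
  have hbound : (∫ t : ℝ, ∫ s : ℝ, ‖∫ u in Ioi (0:ℝ), f t u * h u s‖ ^ 2) ≤
      (4 * lam ^ 3)⁻¹ * T := by
    have hL2 := integral_integral_le_of_le_comp_sub measurableSet_Icc measure_Icc_lt_top.ne
      ((integrable_exp_neg_mul_abs (by positivity : 0 < 2 * lam)).div_const ((2 * lam) ^ 2))
      (fun _ _ => by positivity)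
      (sq_norm_setIntegral_mul_le_of_le_causalExpKernel hlam hfK hhK _) hsupp
    rw [integral_div, integral_exp_neg_mul_abs (by positivity), volume_real_Icc_of_le hT.le,
      sub_zero] at hL2
    convert hL2 using 1
    field_simp
    ring
  refine ⟨hbound, ?_⟩
  rw [integral_integral_norm_sq_rescale hT.le]
  calc _ ≤ (4 * lam ^ 3)⁻¹ * T / T ^ 2 := by gcongr
    _ = (4 * lam ^ 3)⁻¹ / T := by field_simp
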